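/- Let L = {w ∈ {a,b}* : |w|_a = |w|_b} ∪ {w ∈ {a,c}* : |w|_c = 2·|w|_a} ⊆ {a,b,c}* and let φ : {a,b,c}* → {a,b}* be the alphabetic (letter-to-letter) morphism with φ(a) = a, φ(b) = b, φ(c) = b. Then L is accepted by an nrDFAwtl, but φ(L) = L_∨ = {w ∈ {a,b}* : |w|_b = |w|_a or |w|_b = 2·|w|_a} is not accepted by any nrDFAwtl; hence the class of languages accepted by nrDFAwtls is not closed under alphabetic morphisms. -/

import Mathlib

/-- The end-of-tape behaviour of a non-returning automaton with translucent
letters: either a set of states to continue with (the empty set meaning that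
the transition is undefined), or the operation `Accept`. -/
inductive EndMove (Q : Type) where
  | cont : Set Q → EndMove Q
  | accept : EndMove Q

/-- A nondeterministic finite automaton with translucent letters (NFAwtl).
`τ q` is the set of letters that are translucent for state `q`. -/
structure NFAwtl (Q : Type) (A : Type) where
  τ : Q → Set A
  I : Set Q
  F : Set Q
  δ : Q → A → Set Q
  tr_compat : ∀ q a, a ∈ τ q → δ q a = ∅

namespace NFAwtl

variable {Q A : Type}

/-- A single computation step of an NFAwtl: the first letter (from the left)
that is not translucent for the current state is read and deleted. -/
inductive Step (M : NFAwtl Q A) : Q × List A → Q × List A → Prop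
  | read (q q' : Q) (u v : List A) (a : A) :
      (∀ b ∈ u, b ∈ M.τ q) → a ∉ M.τ q → q' ∈ M.δ q a →
      Step M (q, u ++ a :: v) (q', u ++ v)

/-- The language accepted by an NFAwtl: words from which some computation
reaches a configuration whose remaining tape contents is translucent for a
final state. -/
def lang (M : NFAwtl Q A) : Set (List A) :=
  { w | ∃ q₀ ∈ M.I, ∃ q w', Relation.ReflTransGen (Step M) (q₀, w) (q, w') ∧
        (∀ b ∈ w', b ∈ M.τ q) ∧ q ∈ M.F }

/-- An NFAwtl is deterministic (a DFAwtl) if it has a single initial state and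
at most one transition for each state/letter pair. -/
def IsDet (M : NFAwtl Q A) : Prop :=
  (∃ q, M.I = {q}) ∧ ∀ q a, (M.δ q a).Subsingleton

end NFAwtl

/-- A configuration of a non-returning automaton with translucent letters:
`conf x q w` means the tape contains `x ++ w` followed by the end-of-tape
marker, the current state is `q`, and the head is positioned at the first
letter of `w`; `accept` is the accepting halting configuration. -/
inductive NrConf (Q : Type) (A : Type) where
  | conf : List A → Q → List A → NrConf Q A
  | accept : NrConf Q A

/-- A non-returning nondeterministic finite automaton with translucent
letters (nrNFAwtl). -/
structure NrNFAwtl (Q : Type) (A : Type) where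
  τ : Q → Set A
  I : Set Q
  δ : Q → A → Set Q
  δend : Q → EndMove Q
  tr_compat : ∀ q a, a ∈ τ q → δ q a = ∅

namespace NrNFAwtl

variable {Q A : Type}

/-- A single computation step of an nrNFAwtl. -/
inductive Step (M : NrNFAwtl Q A) : NrConf Q A → NrConf Q A → Prop
  | read (x : List A) (q q' : Q) (u v : List A) (a : A) :
      (∀ b ∈ u, b ∈ M.τ q) → a ∉ M.τ q → q' ∈ M.δ q a →
      Step M (.conf x q (u ++ a :: v)) (.conf (x ++ u) q' v)
  | restart (x w : List A) (q q' : Q) (S : Set Q) :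
      (∀ b ∈ w, b ∈ M.τ q) → M.δend q = .cont S → q' ∈ S →
      Step M (.conf x q w) (.conf [] q' (x ++ w))
  | accept (x w : List A) (q : Q) :
      (∀ b ∈ w, b ∈ M.τ q) → M.δend q = .accept →
      Step M (.conf x q w) .accept

/-- The language accepted by an nrNFAwtl. -/
def lang (M : NrNFAwtl Q A) : Set (List A) :=
  { w | ∃ q₀ ∈ M.I, Relation.ReflTransGen (Step M) (.conf [] q₀ w) .accept }

/-- An nrNFAwtl is deterministic (an nrDFAwtl) if it has a single initial
state and, for every state and every letter (including the end-of-tape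
marker), at most one transition is available. -/
def IsDet (M : NrNFAwtl Q A) : Prop :=
  (∃ q, M.I = {q}) ∧ (∀ q a, (M.δ q a).Subsingleton) ∧
  (∀ q S, M.δend q = .cont S → S.Subsingleton)

end NrNFAwtl

/-- `L` is accepted by some NFAwtl. -/
def AcceptedByNFAwtl {A : Type} [Fintype A] (L : Set (List A)) : Prop :=
  ∃ (Q : Type) (_ : Fintype Q) (M : NFAwtl Q A), M.lang = L

/-- `L` is accepted by some DFAwtl. -/
def AcceptedByDFAwtl {A : Type} [Fintype A] (L : Set (List A)) : Prop :=
  ∃ (Q : Type) (_ : Fintype Q) (M : NFAwtl Q A), M.IsDet ∧ M.lang = L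

/-- `L` is accepted by some nrNFAwtl. -/
def AcceptedByNrNFAwtl {A : Type} [Fintype A] (L : Set (List A)) : Prop :=
  ∃ (Q : Type) (_ : Fintype Q) (M : NrNFAwtl Q A), M.lang = L

/-- `L` is accepted by some nrDFAwtl. -/
def AcceptedByNrDFAwtl {A : Type} [Fintype A] (L : Set (List A)) : Prop :=
  ∃ (Q : Type) (_ : Fintype Q) (M : NrNFAwtl Q A), M.IsDet ∧ M.lang = L

/-- The three-letter alphabet `{a, b, c}`. -/
inductive Γ3 : Type
  | a | b | c
deriving DecidableEq

instance instFintypeΓ3 : Fintype Γ3 :=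
  ⟨{Γ3.a, Γ3.b, Γ3.c}, fun x => by cases x <;> simp⟩

/-- The two-letter alphabet `{a, b}`. -/
inductive Γ2 : Type
  | a | b
deriving DecidableEq

instance instFintypeΓ2 : Fintype Γ2 :=
  ⟨{Γ2.a, Γ2.b}, fun x => by cases x <;> simp⟩

/-- The alphabetic morphism `φ` with `φ(a) = a`, `φ(b) = b`, `φ(c) = b`
(on letters). -/
def phiLetter : Γ3 → Γ2
  | .a => .a
  | .b => .b
  | .c => .b

/-- The language `L = {w ∈ {a,b}* : |w|_a = |w|_b} ∪ {w ∈ {a,c}* : |w|_c = 2·|w|_a}`. -/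
def Lmorph : Set (List Γ3) :=
  { w | (∀ x ∈ w, x = Γ3.a ∨ x = Γ3.b) ∧ w.count Γ3.a = w.count Γ3.b } ∪
  { w | (∀ x ∈ w, x = Γ3.a ∨ x = Γ3.c) ∧ w.count Γ3.c = 2 * w.count Γ3.a }

/-- The language `L_∨ = {w ∈ {a,b}* : |w|_b = |w|_a or |w|_b = 2·|w|_a}`. -/
def Lvee : Set (List Γ2) :=
  { w | w.count Γ2.b = w.count Γ2.a ∨ w.count Γ2.b = 2 * w.count Γ2.a }
/-! ### Part 2: the image of `Lmorph` under `φ` is `Lvee`. -/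

section Part2

/-- The embedding `a ↦ a`, `b ↦ b`. -/
def psi1 : Γ2 → Γ3 | .a => .a | .b => .b

/-- The embedding `a ↦ a`, `b ↦ c`. -/
def psi2 : Γ2 → Γ3 | .a => .a | .b => .c

lemma count_map_phi_a (l : List Γ3) :
    (l.map phiLetter).count Γ2.a = l.count Γ3.a := by
  induction l with
  | nil => rfl
  | cons x t ih => cases x <;> simp [phiLetter, List.count_cons, ih]

lemma count_map_phi_b (l : List Γ3) :
    (l.map phiLetter).count Γ2.b = l.count Γ3.b + l.count Γ3.c := by
  induction l with
  | nil => rfl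
  | cons x t ih => cases x <;> simp [phiLetter, List.count_cons, ih] <;> omega

lemma count_map_psi1_a (l : List Γ2) :
    (l.map psi1).count Γ3.a = l.count Γ2.a := by
  induction l with
  | nil => rfl
  | cons x t ih => cases x <;> simp [psi1, List.count_cons, ih]

lemma count_map_psi1_b (l : List Γ2) :
    (l.map psi1).count Γ3.b = l.count Γ2.b := by
  induction l with
  | nil => rfl
  | cons x t ih => cases x <;> simp [psi1, List.count_cons, ih]

lemma count_map_psi2_a (l : List Γ2) :
    (l.map psi2).count Γ3.a = l.count Γ2.a := by
  induction l with
  | nil => rfl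
  | cons x t ih => cases x <;> simp [psi2, List.count_cons, ih]

lemma count_map_psi2_c (l : List Γ2) :
    (l.map psi2).count Γ3.c = l.count Γ2.b := by
  induction l with
  | nil => rfl
  | cons x t ih => cases x <;> simp [psi2, List.count_cons, ih]

lemma count_c_eq_zero {w : List Γ3} (h : ∀ x ∈ w, x = Γ3.a ∨ x = Γ3.b) :
    w.count Γ3.c = 0 := by
  refine List.count_eq_zero.mpr (fun hc => ?_)
  rcases h _ hc with h' | h' <;> exact Γ3.noConfusion h'

lemma count_b_eq_zero {w : List Γ3} (h : ∀ x ∈ w, x = Γ3.a ∨ x = Γ3.c) :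
    w.count Γ3.b = 0 := by
  refine List.count_eq_zero.mpr (fun hc => ?_)
  rcases h _ hc with h' | h' <;> exact Γ3.noConfusion h'

theorem image_phi_eq :
    { y : List Γ2 | ∃ w ∈ Lmorph, y = w.map phiLetter } = Lvee := by
  ext y
  constructor
  · rintro ⟨w, hw, rfl⟩
    rcases hw with ⟨hpure, hcnt⟩ | ⟨hpure, hcnt⟩
    · left
      rw [count_map_phi_b, count_map_phi_a, count_c_eq_zero hpure]
      omega
    · right
      rw [count_map_phi_b, count_map_phi_a, count_b_eq_zero hpure, hcnt]; omega
  · rintro (h | h)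
    · refine ⟨y.map psi1, Or.inl ⟨?_, ?_⟩, ?_⟩
      · intro x hx
        rcases List.mem_map.mp hx with ⟨z, _, rfl⟩
        cases z
        · exact Or.inl rfl
        · exact Or.inr rfl
      · rw [count_map_psi1_a, count_map_psi1_b, h]
      · rw [List.map_map]
        have : phiLetter ∘ psi1 = id := by funext z; cases z <;> rfl
        rw [this, List.map_id]
    · refine ⟨y.map psi2, Or.inr ⟨?_, ?_⟩, ?_⟩
      · intro x hx
        rcases List.mem_map.mp hx with ⟨z, _, rfl⟩
        cases z
        · exact Or.inl rfl
        · exact Or.inr rfl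
      · rw [count_map_psi2_a, count_map_psi2_c, h]
      · rw [List.map_map]
        have : phiLetter ∘ psi2 = id := by funext z; cases z <;> rfl
        rw [this, List.map_id]

end Part2
/-! ### Part 1: an nrDFAwtl accepting `Lmorph`. -/

section Part1

/-- States of the nrDFAwtl for `Lmorph`. -/
inductive StM : Type
  | S0 | A1u | Sab | Aab | Bab | Wab | Sac | NAC | NCC | NC | NA | Wac
deriving DecidableEq

instance instFintypeStM : Fintype StM :=
  ⟨{StM.S0, StM.A1u, StM.Sab, StM.Aab, StM.Bab, StM.Wab, StM.Sac, StM.NAC, StM.NCC, StM.NC,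
    StM.NA, StM.Wac}, fun x => by cases x <;> simp⟩

open StM

/-- Translucency map. -/
def Mτ : StM → Set Γ3
  | S0 => ∅
  | A1u => {Γ3.a}
  | Sab => ∅
  | Aab => {Γ3.a}
  | Bab => {Γ3.b}
  | Wab => {Γ3.a, Γ3.b}
  | Sac => ∅
  | NAC => ∅
  | NCC => {Γ3.a}
  | NC => {Γ3.a}
  | NA => {Γ3.c}
  | Wac => {Γ3.a, Γ3.c}

/-- Transition function (deterministic, as an `Option`). -/
def Mδo : StM → Γ3 → Option StM
  | S0, .a => some A1u
  | S0, .b => some Bab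
  | S0, .c => some NAC
  | A1u, .b => some Wab
  | A1u, .c => some NC
  | Sab, .a => some Aab
  | Sab, .b => some Bab
  | Aab, .b => some Wab
  | Bab, .a => some Wab
  | Sac, .a => some NCC
  | Sac, .c => some NAC
  | NAC, .a => some NC
  | NAC, .c => some NA
  | NCC, .c => some NC
  | NC, .c => some Wac
  | NA, .a => some Wac
  | _, _ => none

/-- End-of-tape behaviour. -/
def Mend : StM → EndMove StM
  | S0 => .accept
  | Sab => .accept
  | Sac => .accept
  | Wab => .cont {Sab}
  | Wac => .cont {Sac}
  | _ => .cont ∅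

/-- The nrDFAwtl for `Lmorph`. -/
def M1 : NrNFAwtl StM Γ3 where
  τ := Mτ
  I := {S0}
  δ := fun q ℓ => (Mδo q ℓ).elim ∅ (fun s => {s})
  δend := Mend
  tr_compat := by
    intro q ℓ h
    cases q <;> cases ℓ <;> simp_all [Mτ, Mδo]

lemma M1_det : M1.IsDet := by
  refine ⟨⟨S0, rfl⟩, ?_, ?_⟩
  · intro q ℓ
    show ((Mδo q ℓ).elim ∅ (fun s => {s}) : Set StM).Subsingleton
    cases Mδo q ℓ
    · exact Set.subsingleton_empty
    · exact Set.subsingleton_singleton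
  · intro q S h
    cases q <;> simp_all [M1, Mend] <;> subst h <;>
      first | exact Set.subsingleton_empty | exact Set.subsingleton_singleton

end Part1
section Part1b

open StM

lemma M1_step_read {q q' : StM} {ℓ : Γ3} (x u v : List Γ3)
    (hu : ∀ b ∈ u, b ∈ Mτ q) (hℓ : ℓ ∉ Mτ q) (hδ : Mδo q ℓ = some q') :
    NrNFAwtl.Step M1 (.conf x q (u ++ ℓ :: v)) (.conf (x ++ u) q' v) := by
  refine NrNFAwtl.Step.read x q q' u v ℓ hu hℓ ?_
  show q' ∈ (Mδo q ℓ).elim ∅ (fun s => ({s} : Set StM))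
  rw [hδ]; rfl

lemma M1_step_restart {q q' : StM} (x w : List Γ3)
    (hw : ∀ b ∈ w, b ∈ Mτ q) (hq : Mend q = .cont ({q'} : Set StM)) :
    NrNFAwtl.Step M1 (.conf x q w) (.conf [] q' (x ++ w)) :=
  NrNFAwtl.Step.restart x w q q' {q'} hw hq rfl

lemma M1_step_accept {q : StM} (x w : List Γ3)
    (hw : ∀ b ∈ w, b ∈ Mτ q) (hq : Mend q = .accept) :
    NrNFAwtl.Step M1 (.conf x q w) .accept :=
  NrNFAwtl.Step.accept x w q hw hq

lemma first_split {p : Γ3} : ∀ {v : List Γ3}, p ∈ v →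
    ∃ α β, v = α ++ p :: β ∧ ∀ ξ ∈ α, ξ ≠ p := by
  intro v
  induction v with
  | nil => intro h; exact absurd h (List.not_mem_nil (a := p))
  | cons x t ih =>
    intro h
    by_cases hx : x = p
    · exact ⟨[], t, by simp [hx], by simp⟩
    · have : p ∈ t := by
        rcases List.mem_cons.mp h with h' | h'
        · exact absurd h'.symm hx
        · exact h'
      obtain ⟨α, β, rfl, hα⟩ := ih this
      exact ⟨x :: α, β, rfl, by
        intro ξ hξ
        rcases List.mem_cons.mp hξ with rfl | hξ'
        · exact hx
        · exact hα ξ hξ'⟩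

lemma count_zero_of_ne {p : Γ3} {α : List Γ3} (h : ∀ ξ ∈ α, ξ ≠ p) :
    α.count p = 0 :=
  List.count_eq_zero.mpr (fun hc => h p hc rfl)

/-- Completeness for the `{a,b}` branch. -/
lemma run_ab : ∀ n (w : List Γ3), w.length ≤ n →
    (∀ x ∈ w, x = Γ3.a ∨ x = Γ3.b) → w.count Γ3.a = w.count Γ3.b →
    Relation.ReflTransGen (NrNFAwtl.Step M1) (.conf [] Sab w) .accept ∧
    Relation.ReflTransGen (NrNFAwtl.Step M1) (.conf [] S0 w) .accept := by
  intro n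
  induction n with
  | zero =>
    intro w hlen _ _
    have : w = [] := List.length_eq_zero_iff.mp (Nat.le_zero.mp hlen)
    subst this
    constructor <;>
      exact Relation.ReflTransGen.single (M1_step_accept [] [] (by simp) rfl)
  | succ n ih =>
    intro w hlen hpure hcnt
    match w with
    | [] =>
      constructor <;>
        exact Relation.ReflTransGen.single (M1_step_accept [] [] (by simp) rfl)
    | ℓ :: v =>
      -- helper to build the two runs uniformly
      have key : ∀ q A' : StM, Mτ q = ∅ → Mend q = .accept →
          (ℓ = Γ3.a → Mδo q Γ3.a = some A' ∧ Mτ A' = {Γ3.a} ∧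
            Mδo A' Γ3.b = some Wab) →
          (ℓ = Γ3.b → Mδo q Γ3.b = some Bab) →
          Relation.ReflTransGen (NrNFAwtl.Step M1) (.conf [] q (ℓ :: v)) .accept := by
        intro q A' hτ hend hA hB
        rcases hpure ℓ (List.mem_cons_self (a := ℓ) (l := v)) with rfl | rfl
        · -- first letter is a; find first b in v
          obtain ⟨hδa, hτA, hδb⟩ := hA rfl
          have hbv : Γ3.b ∈ v := by
            have h1 : v.count Γ3.a + 1 = v.count Γ3.b := by
              have := hcnt
              simp [List.count_cons] at this
              omega
            have : 0 < v.count Γ3.b := by omega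
            exact List.count_pos_iff.mp this
          obtain ⟨α, β, rfl, hα⟩ := first_split hbv
          have hαa : ∀ ξ ∈ α, ξ = Γ3.a := by
            intro ξ hξ
            rcases hpure ξ (by simp [hξ]) with h | h
            · exact h
            · exact absurd h (hα ξ hξ)
          have s1 : NrNFAwtl.Step M1 (.conf [] q (Γ3.a :: (α ++ Γ3.b :: β)))
              (.conf [] A' (α ++ Γ3.b :: β)) := by
            have := M1_step_read (q := q) (q' := A') (ℓ := Γ3.a) [] [] (α ++ Γ3.b :: β)
              (by simp) (by simp [hτ]) hδa
            simpa using this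
          have s2 : NrNFAwtl.Step M1 (.conf [] A' (α ++ Γ3.b :: β))
              (.conf α Wab β) := by
            have := M1_step_read (q := A') (q' := Wab) (ℓ := Γ3.b) [] α β
              (by intro b hb; rw [hτA]; simp [hαa b hb]) (by simp [hτA]) hδb
            simpa using this
          have s3 : NrNFAwtl.Step M1 (.conf α Wab β) (.conf [] Sab (α ++ β)) := by
            refine M1_step_restart α β ?_ rfl
            intro b hb
            rcases hpure b (by simp [hb]) with h | h <;> simp [Mτ, h]
          have hrec := (ih (α ++ β) (by
              have := hlen; simp at this ⊢; omega)
            (by intro x hx; exact hpure x (by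
                rcases List.mem_append.mp hx with h | h <;> simp [h]))
            (by
              have := hcnt
              simp [List.count_cons, List.count_append] at this ⊢
              omega)).1
          exact Relation.ReflTransGen.trans
            (Relation.ReflTransGen.head s1
              (Relation.ReflTransGen.head s2 (Relation.ReflTransGen.single s3))) hrec
        · -- first letter is b; find first a in v
          have hδb := hB rfl
          have hav : Γ3.a ∈ v := by
            have h1 : v.count Γ3.b + 1 = v.count Γ3.a := by
              have := hcnt
              simp [List.count_cons] at this
              omega
            have : 0 < v.count Γ3.a := by omega
            exact List.count_pos_iff.mp this
          obtain ⟨α, β, rfl, hα⟩ := first_split hav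
          have hαb : ∀ ξ ∈ α, ξ = Γ3.b := by
            intro ξ hξ
            rcases hpure ξ (by simp [hξ]) with h | h
            · exact absurd h (hα ξ hξ)
            · exact h
          have s1 : NrNFAwtl.Step M1 (.conf [] q (Γ3.b :: (α ++ Γ3.a :: β)))
              (.conf [] Bab (α ++ Γ3.a :: β)) := by
            have := M1_step_read (q := q) (q' := Bab) (ℓ := Γ3.b) [] [] (α ++ Γ3.a :: β)
              (by simp) (by simp [hτ]) hδb
            simpa using this
          have s2 : NrNFAwtl.Step M1 (.conf [] Bab (α ++ Γ3.a :: β))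
              (.conf α Wab β) := by
            have := M1_step_read (q := Bab) (q' := Wab) (ℓ := Γ3.a) [] α β
              (by intro b hb; simp [Mτ, hαb b hb]) (by simp [Mτ]) rfl
            simpa using this
          have s3 : NrNFAwtl.Step M1 (.conf α Wab β) (.conf [] Sab (α ++ β)) := by
            refine M1_step_restart α β ?_ rfl
            intro b hb
            rcases hpure b (by simp [hb]) with h | h <;> simp [Mτ, h]
          have hrec := (ih (α ++ β) (by
              have := hlen; simp at this ⊢; omega)
            (by intro x hx; exact hpure x (by
                rcases List.mem_append.mp hx with h | h <;> simp [h]))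
            (by
              have := hcnt
              simp [List.count_cons, List.count_append] at this ⊢
              omega)).1
          exact Relation.ReflTransGen.trans
            (Relation.ReflTransGen.head s1
              (Relation.ReflTransGen.head s2 (Relation.ReflTransGen.single s3))) hrec
      constructor
      · exact key Sab Aab rfl rfl (fun _ => ⟨rfl, rfl, rfl⟩) (fun _ => rfl)
      · exact key S0 A1u rfl rfl (fun _ => ⟨rfl, rfl, rfl⟩) (fun _ => rfl)

end Part1b
section Part1c

open StM

set_option linter.constructorNameAsVariable false

/-- Completeness for the `{a,c}` branch. -/
lemma run_ac : ∀ n (w : List Γ3), w.length ≤ n →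
    (∀ x ∈ w, x = Γ3.a ∨ x = Γ3.c) → w.count Γ3.c = 2 * w.count Γ3.a →
    Relation.ReflTransGen (NrNFAwtl.Step M1) (.conf [] Sac w) .accept ∧
    Relation.ReflTransGen (NrNFAwtl.Step M1) (.conf [] S0 w) .accept := by
  intro n
  induction n with
  | zero =>
    intro w hlen _ _
    have : w = [] := List.length_eq_zero_iff.mp (Nat.le_zero.mp hlen)
    subst this
    constructor <;>
      exact Relation.ReflTransGen.single (M1_step_accept [] [] (by simp) rfl)
  | succ n ih =>
    intro w hlen hpure hcnt
    match w with
    | [] =>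
      constructor <;>
        exact Relation.ReflTransGen.single (M1_step_accept [] [] (by simp) rfl)
    | ℓ :: v =>
      have key : ∀ q A' : StM, Mτ q = ∅ → Mend q = .accept →
          (ℓ = Γ3.a → Mδo q Γ3.a = some A' ∧ Mτ A' = {Γ3.a} ∧
            Mδo A' Γ3.c = some NC) →
          (ℓ = Γ3.c → Mδo q Γ3.c = some NAC) →
          Relation.ReflTransGen (NrNFAwtl.Step M1) (.conf [] q (ℓ :: v)) .accept := by
        intro q A' hτ hend hA hC
        rcases hpure ℓ (List.mem_cons_self (a := ℓ) (l := v)) with rfl | rfl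
        · -- first letter is a; need two c's from v
          obtain ⟨hδa, hτA, hδc⟩ := hA rfl
          have hcv : Γ3.c ∈ v := by
            have h1 : v.count Γ3.c = 2 * v.count Γ3.a + 2 := by
              have := hcnt
              simp [List.count_cons] at this
              omega
            have : 0 < v.count Γ3.c := by omega
            exact List.count_pos_iff.mp this
          obtain ⟨α, β, rfl, hα⟩ := first_split hcv
          have hαa : ∀ ξ ∈ α, ξ = Γ3.a := by
            intro ξ hξ
            rcases hpure ξ (by simp [hξ]) with h | h
            · exact h
            · exact absurd h (hα ξ hξ)
          have hcβ : Γ3.c ∈ β := by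
            have := hcnt
            have hα0 : α.count Γ3.c = 0 := count_zero_of_ne hα
            simp [List.count_cons, List.count_append, hα0] at this
            have : 0 < β.count Γ3.c := by omega
            exact List.count_pos_iff.mp this
          obtain ⟨α', β', rfl, hα'⟩ := first_split hcβ
          have hα'a : ∀ ξ ∈ α', ξ = Γ3.a := by
            intro ξ hξ
            rcases hpure ξ (by simp [hξ]) with h | h
            · exact h
            · exact absurd h (hα' ξ hξ)
          have s1 : NrNFAwtl.Step M1
              (.conf [] q (Γ3.a :: (α ++ Γ3.c :: (α' ++ Γ3.c :: β'))))
              (.conf [] A' (α ++ Γ3.c :: (α' ++ Γ3.c :: β'))) := by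
            have := M1_step_read (q := q) (q' := A') (ℓ := Γ3.a) [] []
              (α ++ Γ3.c :: (α' ++ Γ3.c :: β')) (by simp) (by simp [hτ]) hδa
            simpa using this
          have s2 : NrNFAwtl.Step M1
              (.conf [] A' (α ++ Γ3.c :: (α' ++ Γ3.c :: β')))
              (.conf α NC (α' ++ Γ3.c :: β')) := by
            have := M1_step_read (q := A') (q' := NC) (ℓ := Γ3.c) [] α
              (α' ++ Γ3.c :: β')
              (by intro b hb; rw [hτA]; simp [hαa b hb]) (by simp [hτA]) hδc
            simpa using this
          have s3 : NrNFAwtl.Step M1 (.conf α NC (α' ++ Γ3.c :: β'))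
              (.conf (α ++ α') Wac β') := by
            exact M1_step_read (q := NC) (q' := Wac) (ℓ := Γ3.c) α α' β'
              (by intro b hb; simp [Mτ, hα'a b hb]) (by simp [Mτ]) rfl
          have s4 : NrNFAwtl.Step M1 (.conf (α ++ α') Wac β')
              (.conf [] Sac ((α ++ α') ++ β')) := by
            refine M1_step_restart (α ++ α') β' ?_ rfl
            intro b hb
            rcases hpure b (by simp [hb]) with h | h <;> simp [Mτ, h]
          have hrec := (ih ((α ++ α') ++ β') (by
              have := hlen; simp at this ⊢; omega)
            (by intro x hx; refine hpure x ?_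
                rcases List.mem_append.mp hx with h | h
                · rcases List.mem_append.mp h with h | h <;> simp [h]
                · simp [h])
            (by
              have := hcnt
              simp [List.count_cons, List.count_append] at this ⊢
              omega)).1
          exact Relation.ReflTransGen.trans
            (Relation.ReflTransGen.head s1 (Relation.ReflTransGen.head s2
              (Relation.ReflTransGen.head s3 (Relation.ReflTransGen.single s4)))) hrec
        · -- first letter is c
          have hδc := hC rfl
          have s1 : NrNFAwtl.Step M1 (.conf [] q (Γ3.c :: v))
              (.conf [] NAC v) := by
            have := M1_step_read (q := q) (q' := NAC) (ℓ := Γ3.c) [] [] v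
              (by simp) (by simp [hτ]) hδc
            simpa using this
          -- v contains an a
          have hav : 0 < v.count Γ3.a := by
            have := hcnt
            simp [List.count_cons] at this
            omega
          match v with
          | [] => simp at hav
          | Γ3.b :: v' =>
            rcases hpure Γ3.b (by simp) with h | h <;> exact Γ3.noConfusion h
          | Γ3.a :: v' =>
            -- read the a, then find first c in v'
            have s2 : NrNFAwtl.Step M1 (.conf [] NAC (Γ3.a :: v'))
                (.conf [] NC v') := by
              have := M1_step_read (q := NAC) (q' := NC) (ℓ := Γ3.a) [] [] v'
                (by simp) (by simp [Mτ]) rfl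
              simpa using this
            have hcv' : Γ3.c ∈ v' := by
              have := hcnt
              simp [List.count_cons] at this
              have : 0 < v'.count Γ3.c := by omega
              exact List.count_pos_iff.mp this
            obtain ⟨α, β, rfl, hα⟩ := first_split hcv'
            have hαa : ∀ ξ ∈ α, ξ = Γ3.a := by
              intro ξ hξ
              rcases hpure ξ (by simp [hξ]) with h | h
              · exact h
              · exact absurd h (hα ξ hξ)
            have s3 : NrNFAwtl.Step M1 (.conf [] NC (α ++ Γ3.c :: β))
                (.conf α Wac β) := by
              have := M1_step_read (q := NC) (q' := Wac) (ℓ := Γ3.c) [] α β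
                (by intro b hb; simp [Mτ, hαa b hb]) (by simp [Mτ]) rfl
              simpa using this
            have s4 : NrNFAwtl.Step M1 (.conf α Wac β)
                (.conf [] Sac (α ++ β)) := by
              refine M1_step_restart α β ?_ rfl
              intro b hb
              rcases hpure b (by simp [hb]) with h | h <;> simp [Mτ, h]
            have hrec := (ih (α ++ β) (by
                have := hlen; simp at this ⊢; omega)
              (by intro x hx; refine hpure x ?_
                  rcases List.mem_append.mp hx with h | h <;> simp [h])
              (by
                have := hcnt
                simp [List.count_cons, List.count_append] at this ⊢
                omega)).1
            exact Relation.ReflTransGen.trans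
              (Relation.ReflTransGen.head s1 (Relation.ReflTransGen.head s2
                (Relation.ReflTransGen.head s3 (Relation.ReflTransGen.single s4)))) hrec
          | Γ3.c :: v' =>
            -- read the c, go to NA, find first a in v'
            have s2 : NrNFAwtl.Step M1 (.conf [] NAC (Γ3.c :: v'))
                (.conf [] NA v') := by
              have := M1_step_read (q := NAC) (q' := NA) (ℓ := Γ3.c) [] [] v'
                (by simp) (by simp [Mτ]) rfl
              simpa using this
            have hav' : Γ3.a ∈ v' := by
              have h2 : Γ3.a ∈ Γ3.c :: v' := List.count_pos_iff.mp hav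
              simpa using h2
            obtain ⟨α, β, rfl, hα⟩ := first_split hav'
            have hαc : ∀ ξ ∈ α, ξ = Γ3.c := by
              intro ξ hξ
              rcases hpure ξ (by simp [hξ]) with h | h
              · exact absurd h (hα ξ hξ)
              · exact h
            have s3 : NrNFAwtl.Step M1 (.conf [] NA (α ++ Γ3.a :: β))
                (.conf α Wac β) := by
              have := M1_step_read (q := NA) (q' := Wac) (ℓ := Γ3.a) [] α β
                (by intro b hb; simp [Mτ, hαc b hb]) (by simp [Mτ]) rfl
              simpa using this
            have s4 : NrNFAwtl.Step M1 (.conf α Wac β)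
                (.conf [] Sac (α ++ β)) := by
              refine M1_step_restart α β ?_ rfl
              intro b hb
              rcases hpure b (by simp [hb]) with h | h <;> simp [Mτ, h]
            have hrec := (ih (α ++ β) (by
                have := hlen; simp at this ⊢; omega)
              (by intro x hx; refine hpure x ?_
                  rcases List.mem_append.mp hx with h | h <;> simp [h])
              (by
                have := hcnt
                simp [List.count_cons, List.count_append] at this ⊢
                omega)).1
            exact Relation.ReflTransGen.trans
              (Relation.ReflTransGen.head s1 (Relation.ReflTransGen.head s2
                (Relation.ReflTransGen.head s3 (Relation.ReflTransGen.single s4)))) hrec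
      constructor
      · exact key Sac NCC rfl rfl (fun _ => ⟨rfl, rfl, rfl⟩) (fun _ => rfl)
      · exact key S0 A1u rfl rfl (fun _ => ⟨rfl, rfl, rfl⟩) (fun _ => rfl)

end Part1c
section Part1d

open StM

/-- Allowed letters in the skipped part `x`, per state. -/
def Pur : StM → Γ3 → Prop
  | S0, _ => False
  | Sab, _ => False
  | Sac, _ => False
  | NAC, _ => False
  | A1u, ξ => ξ = Γ3.a
  | Aab, ξ => ξ = Γ3.a
  | NCC, ξ => ξ = Γ3.a
  | NC, ξ => ξ = Γ3.a
  | Bab, ξ => ξ = Γ3.b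
  | NA, ξ => ξ = Γ3.c
  | Wab, ξ => ξ = Γ3.a ∨ ξ = Γ3.b
  | Wac, ξ => ξ = Γ3.a ∨ ξ = Γ3.c

/-- Arithmetic invariant per state: args are counts `na nb nc` of the whole
tape, and counts `A B C` of the original input. -/
def Ar : StM → ℕ → ℕ → ℕ → ℕ → ℕ → ℕ → Prop
  | S0, na, nb, nc, A, B, C => na = A ∧ nb = B ∧ nc = C
  | A1u, na, nb, nc, A, B, C => na + 1 = A ∧ nb = B ∧ nc = C
  | Bab, na, nb, nc, A, B, C => nb + 1 + A = B + na ∧ nc = C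
  | Aab, na, nb, nc, A, B, C => nb + A = na + 1 + B ∧ nc = C
  | Wab, na, nb, nc, A, B, C => nb + A = na + B ∧ nc = C
  | Sab, na, nb, nc, A, B, C => nb + A = na + B ∧ nc = 0 ∧ C = 0
  | Sac, na, nb, nc, A, B, C => nc + 2*A = 2*na + C ∧ nb = 0 ∧ B = 0
  | NCC, na, nb, nc, A, B, C => nc + 2*A = 2*na + 2 + C ∧ nb = B
  | NAC, na, nb, nc, A, B, C => nc + 1 + 2*A = 2*na + C ∧ nb = B
  | NC, na, nb, nc, A, B, C => nc + 2*A = 2*na + 1 + C ∧ nb = B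
  | NA, na, nb, nc, A, B, C => nc + 2 + 2*A = 2*na + C ∧ nb = B
  | Wac, na, nb, nc, A, B, C => nc + 2*A = 2*na + C ∧ nb = B

/-- The invariant maintained along computations of `M1`. -/
def MInv (A B C : ℕ) : NrConf StM Γ3 → Prop
  | .accept => (B = A ∧ C = 0) ∨ (B = 0 ∧ C = 2 * A)
  | .conf x q w => (∀ ξ ∈ x, Pur q ξ) ∧
      Ar q ((x ++ w).count Γ3.a) ((x ++ w).count Γ3.b) ((x ++ w).count Γ3.c) A B C

lemma minv_step {A B C : ℕ} {c d : NrConf StM Γ3}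
    (h : NrNFAwtl.Step M1 c d) (hc : MInv A B C c) : MInv A B C d := by
  cases h with
  | read x q q' u v ℓ hu hℓ hδ =>
    have hδ' : Mδo q ℓ = some q' := by
      revert hδ
      show q' ∈ (Mδo q ℓ).elim ∅ (fun s => ({s} : Set StM)) → _
      cases hh : Mδo q ℓ with
      | none => intro hx; exact absurd hx (Set.notMem_empty _)
      | some s =>
          intro hx
          simp only [Option.elim] at hx
          rw [Set.mem_singleton_iff] at hx
          rw [hx]
    clear hδ hℓ
    obtain ⟨hpx, har⟩ := hc
    cases q <;> cases ℓ <;>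
      first
      | (simp only [Mδo] at hδ'; exact absurd hδ' (Option.some_ne_none _).symm)
      | (simp only [Mδo, Option.some.injEq] at hδ'; subst hδ';
         refine ⟨?_, ?_⟩
         · intro ξ hξ
           rcases List.mem_append.mp hξ with hmem | hmem
           · have hp := hpx ξ hmem; cases ξ <;> simp_all [Pur]
           · have hp := hu ξ hmem; cases ξ <;> simp_all [Pur, Mτ, M1]
         · simp [Ar, List.count_append, List.count_cons] at har ⊢
           omega)
  | restart x w q q' S hw hend hq' =>
    obtain ⟨hpx, har⟩ := hc
    have hend' : Mend q = .cont S := hend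
    cases q <;>
      simp only [Mend, reduceCtorEq, EndMove.cont.injEq] at hend' <;>
      try (rw [← hend'] at hq'; exact absurd hq' (Set.notMem_empty _))
    · -- Wab
      rw [← hend'] at hq'
      rw [Set.mem_singleton_iff] at hq'
      subst hq'
      have hwp : ∀ ξ ∈ w, ξ = Γ3.a ∨ ξ = Γ3.b := by
        intro ξ hξ
        have := hw ξ hξ
        cases ξ <;> simp_all [M1, Mτ]
      have hc0 : (x ++ w).count Γ3.c = 0 := by
        refine List.count_eq_zero.mpr (fun hc => ?_)
        rcases List.mem_append.mp hc with hm | hm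
        · rcases hpx _ hm with h | h <;> exact Γ3.noConfusion h
        · rcases hwp _ hm with h | h <;> exact Γ3.noConfusion h
      refine ⟨by simp [Pur], ?_⟩
      simp only [Ar, List.nil_append] at har ⊢
      constructor
      · exact har.1
      · constructor
        · exact hc0
        · have := har.2; omega
    · -- Wac
      rw [← hend'] at hq'
      rw [Set.mem_singleton_iff] at hq'
      subst hq'
      have hwp : ∀ ξ ∈ w, ξ = Γ3.a ∨ ξ = Γ3.c := by
        intro ξ hξ
        have := hw ξ hξ
        cases ξ <;> simp_all [M1, Mτ]
      have hb0 : (x ++ w).count Γ3.b = 0 := by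
        refine List.count_eq_zero.mpr (fun hc => ?_)
        rcases List.mem_append.mp hc with hm | hm
        · rcases hpx _ hm with h | h <;> exact Γ3.noConfusion h
        · rcases hwp _ hm with h | h <;> exact Γ3.noConfusion h
      refine ⟨by simp [Pur], ?_⟩
      simp only [Ar, List.nil_append] at har ⊢
      constructor
      · exact har.1
      · exact ⟨hb0, by have := har.2; omega⟩
  | accept x w q hw hend =>
    obtain ⟨hpx, har⟩ := hc
    have hend' : Mend q = .accept := hend
    cases q <;> simp only [Mend, reduceCtorEq] at hend'
    · -- S0
      have hx : x = [] := List.eq_nil_iff_forall_not_mem.mpr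
        (fun ξ hξ => hpx ξ hξ)
      have hwnil : w = [] := by
        refine List.eq_nil_iff_forall_not_mem.mpr (fun ξ hξ => ?_)
        have := hw ξ hξ
        simp [M1, Mτ] at this
      subst hx; subst hwnil
      simp only [Ar, List.count_nil, List.nil_append] at har
      exact Or.inl ⟨by omega, by omega⟩
    · -- Sab
      have hx : x = [] := List.eq_nil_iff_forall_not_mem.mpr
        (fun ξ hξ => hpx ξ hξ)
      have hwnil : w = [] := by
        refine List.eq_nil_iff_forall_not_mem.mpr (fun ξ hξ => ?_)
        have := hw ξ hξ
        simp [M1, Mτ] at this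
      subst hx; subst hwnil
      simp only [Ar, List.count_nil, List.nil_append] at har
      exact Or.inl ⟨by omega, by omega⟩
    · -- Sac
      have hx : x = [] := List.eq_nil_iff_forall_not_mem.mpr
        (fun ξ hξ => hpx ξ hξ)
      have hwnil : w = [] := by
        refine List.eq_nil_iff_forall_not_mem.mpr (fun ξ hξ => ?_)
        have := hw ξ hξ
        simp [M1, Mτ] at this
      subst hx; subst hwnil
      simp only [Ar, List.count_nil, List.nil_append] at har
      exact Or.inr ⟨by omega, by omega⟩

lemma minv_run {A B C : ℕ} {c d : NrConf StM Γ3}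
    (h : Relation.ReflTransGen (NrNFAwtl.Step M1) c d) (hc : MInv A B C c) :
    MInv A B C d := by
  induction h with
  | refl => exact hc
  | tail _ hstep ih => exact minv_step hstep ih

theorem lang_M1 : M1.lang = Lmorph := by
  ext w
  constructor
  · rintro ⟨q0, hq0, hrun⟩
    have : q0 = S0 := hq0
    subst this
    have hinv : MInv (w.count Γ3.a) (w.count Γ3.b) (w.count Γ3.c)
        (.conf [] S0 w) := by
      refine ⟨by simp, ?_⟩
      simp [Ar]
    have hacc := minv_run hrun hinv
    rcases hacc with ⟨h1, h2⟩ | ⟨h1, h2⟩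
    · left
      refine ⟨?_, h1.symm⟩
      intro x hx
      cases x
      · exact Or.inl rfl
      · exact Or.inr rfl
      · exact absurd hx (List.count_eq_zero.mp h2)
    · right
      refine ⟨?_, h2⟩
      intro x hx
      cases x
      · exact Or.inl rfl
      · exact absurd hx (List.count_eq_zero.mp h1)
      · exact Or.inr rfl
  · intro hw
    rcases hw with ⟨hpure, hcnt⟩ | ⟨hpure, hcnt⟩
    · exact ⟨S0, rfl, (run_ab w.length w le_rfl hpure hcnt).2⟩
    · exact ⟨S0, rfl, (run_ac w.length w le_rfl hpure hcnt).2⟩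

theorem part1 : AcceptedByNrDFAwtl Lmorph :=
  ⟨StM, inferInstance, M1, M1_det, lang_M1⟩

end Part1d
/-! ### Part 3: `Lvee` is not accepted by any nrDFAwtl. -/

section Part3

variable {Q : Type} {M : NrNFAwtl Q Γ2}

/-- Acceptance from a configuration. -/
def MAcc (M : NrNFAwtl Q Γ2) (c : NrConf Q Γ2) : Prop :=
  Relation.ReflTransGen (NrNFAwtl.Step M) c .accept

/-- The word `a^i b^j`. -/
def wd (i j : ℕ) : List Γ2 :=
  List.replicate i Γ2.a ++ List.replicate j Γ2.b

/-- The configuration at the start of a sweep on `a^i b^j`. -/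
def cfg (q : Q) (i j : ℕ) : NrConf Q Γ2 := .conf [] q (wd i j)

lemma no_step_from_accept {d : NrConf Q Γ2} : ¬ NrNFAwtl.Step M .accept d := by
  intro h; cases h

/-- Inversion for steps out of a configuration. -/
lemma step_inv {x : List Γ2} {q : Q} {w : List Γ2} {d : NrConf Q Γ2}
    (h : NrNFAwtl.Step M (.conf x q w) d) :
    (∃ u a v q', w = u ++ a :: v ∧ (∀ b ∈ u, b ∈ M.τ q) ∧ a ∉ M.τ q ∧
        q' ∈ M.δ q a ∧ d = .conf (x ++ u) q' v) ∨
    (∃ q' S, (∀ b ∈ w, b ∈ M.τ q) ∧ M.δend q = .cont S ∧ q' ∈ S ∧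
        d = .conf [] q' (x ++ w)) ∨
    ((∀ b ∈ w, b ∈ M.τ q) ∧ M.δend q = .accept ∧ d = .accept) := by
  cases h with
  | read x q q' u v a hu ha hq' =>
    exact Or.inl ⟨u, a, v, q', rfl, hu, ha, hq', rfl⟩
  | restart x w q q' S hw he hq' =>
    exact Or.inr (Or.inl ⟨q', S, hw, he, hq', rfl⟩)
  | accept x w q hw he =>
    exact Or.inr (Or.inr ⟨hw, he, rfl⟩)

lemma split_unique {A : Type} {P : A → Prop} :
    ∀ {u u' : List A} {a a' : A} {v v' : List A},
      u ++ a :: v = u' ++ a' :: v' → (∀ b ∈ u, P b) → ¬ P a →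
      (∀ b ∈ u', P b) → ¬ P a' → u = u' ∧ a = a' ∧ v = v' := by
  intro u
  induction u with
  | nil =>
    intro u' a a' v v' heq hu ha hu' ha'
    cases u' with
    | nil => simp_all
    | cons y t =>
      simp only [List.nil_append, List.cons_append, List.cons.injEq] at heq
      exact absurd (heq.1 ▸ hu' y (by simp)) ha
  | cons x t ih =>
    intro u' a a' v v' heq hu ha hu' ha'
    cases u' with
    | nil =>
      simp only [List.cons_append, List.nil_append, List.cons.injEq] at heq
      exact absurd (heq.1 ▸ hu x (by simp)) ha'
    | cons y t' =>
      simp only [List.cons_append, List.cons.injEq] at heq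
      obtain ⟨rfl, heq2⟩ := heq
      obtain ⟨h1, h2, h3⟩ := ih heq2 (fun b hb => hu b (by simp [hb])) ha
        (fun b hb => hu' b (by simp [hb])) ha'
      exact ⟨by rw [h1], h2, h3⟩

lemma step_det (hdet : M.IsDet) {c d d' : NrConf Q Γ2}
    (h1 : NrNFAwtl.Step M c d) (h2 : NrNFAwtl.Step M c d') : d = d' := by
  obtain ⟨-, hδ, hend⟩ := hdet
  cases c with
  | accept => exact absurd h1 no_step_from_accept
  | conf x q w =>
    rcases step_inv h1 with ⟨u, a, v, q', heq, hu, ha, hq', rfl⟩ |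
        ⟨q', S, hw, he, hq', rfl⟩ | ⟨hw, he, rfl⟩ <;>
      rcases step_inv h2 with ⟨u2, a2, v2, q2', heq2, hu2, ha2, hq2', rfl⟩ |
        ⟨q2', S2, hw2, he2, hq2', rfl⟩ | ⟨hw2, he2, rfl⟩
    · rw [heq] at heq2
      obtain ⟨rfl, rfl, rfl⟩ :=
        split_unique (P := fun b => b ∈ M.τ q) heq2 hu ha hu2 ha2
      rw [hδ q a hq' hq2']
    · exact absurd (hw2 a (heq ▸ by simp)) ha
    · exact absurd (hw2 a (heq ▸ by simp)) ha
    · exact absurd (hw a2 (heq2 ▸ by simp)) ha2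
    · rw [he] at he2
      injection he2 with hS
      subst hS
      rw [hend q S he hq' hq2']
    · rw [he] at he2; cases he2
    · exact absurd (hw a2 (heq2 ▸ by simp)) ha2
    · rw [he] at he2; cases he2
    · rfl

lemma acc_step (hdet : M.IsDet) {c d : NrConf Q Γ2}
    (h : NrNFAwtl.Step M c d) : MAcc M c ↔ MAcc M d := by
  constructor
  · intro hacc
    rcases Relation.ReflTransGen.cases_head hacc with heq | ⟨e, hstep, hrest⟩
    · subst heq; exact absurd h no_step_from_accept
    · rwa [step_det hdet h hstep]
  · intro hacc
    exact Relation.ReflTransGen.head h hacc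

lemma acc_congr (hdet : M.IsDet) {c d : NrConf Q Γ2}
    (h : Relation.ReflTransGen (NrNFAwtl.Step M) c d) : MAcc M c ↔ MAcc M d := by
  induction h with
  | refl => rfl
  | tail _ hstep ih => rw [ih, acc_step hdet hstep]

lemma not_acc_of_cycle (hdet : M.IsDet) {c : NrConf Q Γ2}
    (hacc : MAcc M c) (hcyc : Relation.TransGen (NrNFAwtl.Step M) c c) : False := by
  induction hacc using Relation.ReflTransGen.head_induction_on with
  | refl =>
    obtain ⟨e, hstep, -⟩ := Relation.TransGen.head'_iff.mp hcyc
    exact absurd hstep no_step_from_accept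
  | head hstep _ ih =>
    obtain ⟨e, hstep2, hrt⟩ :=
      Relation.TransGen.head'_iff.mp hcyc
    rw [step_det hdet hstep2 hstep] at hrt
    exact ih (Relation.TransGen.tail' hrt hstep)

lemma not_acc_of_no_step {c : NrConf Q Γ2} (hne : c ≠ .accept)
    (hns : ∀ d, ¬ NrNFAwtl.Step M c d) : ¬ MAcc M c := by
  intro hacc
  rcases Relation.ReflTransGen.cases_head hacc with heq | ⟨e, hstep, -⟩
  · exact hne heq
  · exact hns e hstep

/-- A configuration with no successor: every letter of the tape is
translucent-or-undefined, and end-moves are blocked. -/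
lemma no_step_blocked {x w : List Γ2} {p : Q}
    (hread : ∀ ℓ ∈ w, ℓ ∈ M.τ p ∨ M.δ p ℓ = ∅)
    (hend : (∃ ξ ∈ w, ξ ∉ M.τ p) ∨ M.δend p = .cont ∅) :
    ∀ d, ¬ NrNFAwtl.Step M (.conf x p w) d := by
  intro d hd
  rcases step_inv hd with ⟨u, a, v, q', heq, hu, ha, hq', rfl⟩ |
      ⟨q', S, hw, he, hq', rfl⟩ | ⟨hw, he, rfl⟩
  · rcases hread a (heq ▸ by simp) with h | h
    · exact ha h
    · rw [h] at hq'; exact hq'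
  · rcases hend with ⟨ξ, hξ, hnt⟩ | he2
    · exact hnt (hw ξ hξ)
    · rw [he] at he2; injection he2 with hS; rw [hS] at hq'; exact hq'
  · rcases hend with ⟨ξ, hξ, hnt⟩ | he2
    · exact hnt (hw ξ hξ)
    · rw [he] at he2; cases he2

/-- A configuration whose tape starts with a non-translucent, undefined
letter has no successor. -/
lemma no_step_first {x w' : List Γ2} {p : Q} {ℓ0 : Γ2}
    (ha : ℓ0 ∉ M.τ p) (hδ : M.δ p ℓ0 = ∅) :
    ∀ d, ¬ NrNFAwtl.Step M (.conf x p (ℓ0 :: w')) d := by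
  intro d hd
  rcases step_inv hd with ⟨u, a, v, q', heq, hu, ha2, hq', rfl⟩ |
      ⟨q', S, hw, he, hq', rfl⟩ | ⟨hw, he, rfl⟩
  · cases u with
    | nil =>
      simp only [List.nil_append, List.cons.injEq] at heq
      obtain ⟨rfl, -⟩ := heq
      rw [hδ] at hq'; exact hq'
    | cons y t =>
      simp only [List.cons_append, List.cons.injEq] at heq
      exact ha (heq.1 ▸ hu y (by simp))
  · exact ha (hw ℓ0 (by simp))
  · exact ha (hw ℓ0 (by simp))

end Part3
section Part3b

variable {Q : Type} {M : NrNFAwtl Q Γ2}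

open Classical in
/-- A choice of successor state. -/
noncomputable def nxt (M : NrNFAwtl Q Γ2) (p : Q) (ℓ : Γ2) : Q :=
  if h : (M.δ p ℓ).Nonempty then h.some else p

lemma nxt_mem {p : Q} {ℓ : Γ2} (h : (M.δ p ℓ).Nonempty) :
    nxt M p ℓ ∈ M.δ p ℓ := by
  classical
  rw [nxt]
  rw [dif_pos h]
  exact h.some_mem

/-- The deterministic chain of states while reading `a`s. -/
noncomputable def chA (M : NrNFAwtl Q Γ2) (q : Q) (k : ℕ) : Q :=
  (fun p => nxt M p Γ2.a)^[k] q

/-- The deterministic chain of states while reading `b`s. -/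
noncomputable def chB (M : NrNFAwtl Q Γ2) (q : Q) (k : ℕ) : Q :=
  (fun p => nxt M p Γ2.b)^[k] q

lemma chA_zero (q : Q) : chA M q 0 = q := rfl

lemma chA_succ (q : Q) (k : ℕ) :
    chA M q (k + 1) = nxt M (chA M q k) Γ2.a :=
  Function.iterate_succ_apply' _ _ _

lemma chB_zero (q : Q) : chB M q 0 = q := rfl

lemma chB_succ (q : Q) (k : ℕ) :
    chB M q (k + 1) = nxt M (chB M q k) Γ2.b :=
  Function.iterate_succ_apply' _ _ _

lemma chain_periodic {f : Q → Q} {q : Q} {α p : ℕ}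
    (h : f^[α + p] q = f^[α] q) :
    ∀ i, α ≤ i → f^[i + p] q = f^[i] q := by
  intro i hi
  obtain ⟨c, rfl⟩ := Nat.exists_eq_add_of_le hi
  have h1 : α + c + p = c + (α + p) := by omega
  have h2 : α + c = c + α := by omega
  rw [h1, Function.iterate_add_apply, h, h2, Function.iterate_add_apply]

lemma exists_rep [Fintype Q] (f : ℕ → Q) :
    ∃ α β, α < β ∧ β ≤ Fintype.card Q ∧ f α = f β := by
  have hcard : Fintype.card Q < Fintype.card (Fin (Fintype.card Q + 1)) := by simp
  obtain ⟨x, y, hxy, heq⟩ :=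
    Fintype.exists_ne_map_eq_of_card_lt
      (fun i : Fin (Fintype.card Q + 1) => f i) hcard
  rcases Nat.lt_or_ge x.val y.val with h | h
  · exact ⟨x.val, y.val, h, by omega, heq⟩
  · have h' : y.val < x.val := by
      rcases Nat.lt_or_ge y.val x.val with h2 | h2
      · exact h2
      · exact absurd (Fin.ext (by omega)) hxy
    exact ⟨y.val, x.val, h', by omega, heq.symm⟩

lemma wd_cons (i j : ℕ) : wd (i + 1) j = Γ2.a :: wd i j := by
  simp [wd, List.replicate_succ]

lemma stepA {p : Q} (h1 : Γ2.a ∉ M.τ p) (h2 : (M.δ p Γ2.a).Nonempty) (i j : ℕ) :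
    NrNFAwtl.Step M (.conf [] p (wd (i + 1) j))
      (.conf [] (nxt M p Γ2.a) (wd i j)) := by
  have h := NrNFAwtl.Step.read [] p (nxt M p Γ2.a) [] (wd i j) Γ2.a
    (by simp) h1 (nxt_mem h2)
  simpa [wd_cons] using h

lemma runA {q : Q} {k : ℕ}
    (halive : ∀ u < k, Γ2.a ∉ M.τ (chA M q u) ∧ (M.δ (chA M q u) Γ2.a).Nonempty)
    {i : ℕ} (hk : k ≤ i) (j : ℕ) :
    Relation.ReflTransGen (NrNFAwtl.Step M) (cfg q i j)
      (.conf [] (chA M q k) (wd (i - k) j)) := by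
  induction k with
  | zero =>
    have : cfg q i j = .conf [] (chA M q 0) (wd (i - 0) j) := by
      simp [cfg, chA_zero]
    rw [← this]
  | succ k ih =>
    have h1 := ih (fun u hu => halive u (by omega)) (by omega)
    obtain ⟨ha, hd⟩ := halive k (by omega)
    have hstep := stepA ha hd (i - (k + 1)) j
    have heq : i - k = (i - (k + 1)) + 1 := by omega
    rw [heq] at h1
    exact h1.tail (by rw [chA_succ]; exact hstep)

lemma stepB0 {p : Q} (haτ : Γ2.a ∈ M.τ p) (hb : Γ2.b ∉ M.τ p)
    (h2 : (M.δ p Γ2.b).Nonempty) (i j : ℕ) :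
    NrNFAwtl.Step M (.conf [] p (wd i (j + 1)))
      (.conf (List.replicate i Γ2.a) (nxt M p Γ2.b) (List.replicate j Γ2.b)) := by
  have h := NrNFAwtl.Step.read [] p (nxt M p Γ2.b) (List.replicate i Γ2.a)
    (List.replicate j Γ2.b) Γ2.b
    (fun c hc => by rw [List.eq_of_mem_replicate hc]; exact haτ) hb (nxt_mem h2)
  have heq : List.replicate i Γ2.a ++ Γ2.b :: List.replicate j Γ2.b = wd i (j + 1) := by
    simp [wd, List.replicate_succ]
  rw [heq] at h
  simpa using h

lemma stepB1 {p : Q} (hb : Γ2.b ∉ M.τ p) (h2 : (M.δ p Γ2.b).Nonempty)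
    (X : List Γ2) (j : ℕ) :
    NrNFAwtl.Step M (.conf X p (List.replicate (j + 1) Γ2.b))
      (.conf X (nxt M p Γ2.b) (List.replicate j Γ2.b)) := by
  have h := NrNFAwtl.Step.read X p (nxt M p Γ2.b) [] (List.replicate j Γ2.b) Γ2.b
    (by simp) hb (nxt_mem h2)
  simpa [List.replicate_succ] using h

lemma runB {r : Q} (haτ : Γ2.a ∈ M.τ r) {s : ℕ}
    (halive : ∀ v < s, Γ2.b ∉ M.τ (chB M r v) ∧ (M.δ (chB M r v) Γ2.b).Nonempty)
    {i j : ℕ} (hs1 : 1 ≤ s) (hsj : s ≤ j) :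
    Relation.ReflTransGen (NrNFAwtl.Step M) (.conf [] r (wd i j))
      (.conf (List.replicate i Γ2.a) (chB M r s) (List.replicate (j - s) Γ2.b)) := by
  induction s with
  | zero => omega
  | succ s ih =>
    rcases Nat.eq_zero_or_pos s with rfl | hs
    · obtain ⟨hb, hd⟩ := halive 0 (by omega)
      rw [chB_zero] at hb hd
      have hstep := stepB0 haτ hb hd i (j - 1)
      have heq : j = (j - 1) + 1 := by omega
      rw [← heq] at hstep
      have : chB M r 1 = nxt M r Γ2.b := by rw [chB_succ, chB_zero]
      rw [← this] at hstep
      exact Relation.ReflTransGen.single hstep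
    · have h1 := ih (fun v hv => halive v (by omega)) hs (by omega)
      obtain ⟨hb, hd⟩ := halive s (by omega)
      have hstep := stepB1 hb hd (List.replicate i Γ2.a) (j - (s + 1))
      have heq : j - s = (j - (s + 1)) + 1 := by omega
      rw [heq] at h1
      exact h1.tail (by rw [chB_succ]; exact hstep)

lemma wd_all_mem {i j : ℕ} {p : Q} (ha : Γ2.a ∈ M.τ p) (hb : Γ2.b ∈ M.τ p) :
    ∀ ξ ∈ wd i j, ξ ∈ M.τ p := by
  intro ξ _
  cases ξ
  · exact ha
  · exact hb

lemma repl_all_mem {j : ℕ} {p : Q} (hb : Γ2.b ∈ M.τ p) :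
    ∀ ξ ∈ List.replicate j Γ2.b, ξ ∈ M.τ p := by
  intro ξ hξ
  rw [List.eq_of_mem_replicate hξ]
  exact hb

end Part3b
section Part3c

variable {Q : Type} [Fintype Q] {M : NrNFAwtl Q Γ2}

/-- A "zero-consumption restart" state: everything is translucent and the
end-of-tape move is a restart. -/
def ZR (M : NrNFAwtl Q Γ2) (p : Q) : Prop :=
  Γ2.a ∈ M.τ p ∧ Γ2.b ∈ M.τ p ∧ ∃ S, M.δend p = .cont S ∧ S.Nonempty

open Classical in
noncomputable def nxtR (M : NrNFAwtl Q Γ2) (p : Q) : Q :=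
  if h : ZR M p then h.2.2.choose_spec.2.some else p

noncomputable def chR (M : NrNFAwtl Q Γ2) (q : Q) (k : ℕ) : Q :=
  (nxtR M)^[k] q

lemma chR_succ (q : Q) (k : ℕ) : chR M q (k + 1) = nxtR M (chR M q k) :=
  Function.iterate_succ_apply' _ _ _

lemma stepR {p : Q} (h : ZR M p) (i j : ℕ) :
    NrNFAwtl.Step M (cfg p i j) (cfg (nxtR M p) i j) := by
  classical
  obtain ⟨ha, hb, hS⟩ := h
  have hspec := hS.choose_spec
  have hmem : nxtR M p ∈ hS.choose := by
    rw [nxtR, dif_pos ⟨ha, hb, hS⟩]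
    exact hS.choose_spec.2.some_mem
  have := NrNFAwtl.Step.restart [] (wd i j) p (nxtR M p) hS.choose
    (wd_all_mem ha hb) hspec.1 hmem
  simpa [cfg] using this

theorem sweep (hdet : M.IsDet) (q : Q) :
    (∃ p, 1 ≤ p ∧ p ≤ Fintype.card Q ∧ ∀ i j, Fintype.card Q ≤ i →
        (MAcc M (cfg q i j) ↔ MAcc M (cfg q (i + p) j))) ∨
    (∃ p, 1 ≤ p ∧ p ≤ Fintype.card Q ∧ ∀ i j, Fintype.card Q ≤ i →
        Fintype.card Q ≤ j →
        (MAcc M (cfg q i j) ↔ MAcc M (cfg q i (j + p)))) ∨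
    (∀ i j, Fintype.card Q ≤ i → Fintype.card Q ≤ j → ¬ MAcc M (cfg q i j)) ∨
    (∀ i j, Fintype.card Q ≤ i → Fintype.card Q ≤ j → MAcc M (cfg q i j)) ∨
    (∃ q' t s, t < Fintype.card Q ∧ s < Fintype.card Q ∧ 1 ≤ t + s ∧
      ∀ i j, Fintype.card Q ≤ i → Fintype.card Q ≤ j →
        Relation.TransGen (NrNFAwtl.Step M) (cfg q i j) (cfg q' (i - t) (j - s))) := by
  classical
  set m := Fintype.card Q with hm
  -- Phase 0: follow the chain of zero-consumption restarts.
  by_cases hR : ∀ k, ZR M (chR M q k)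
  · -- the restart chain never exits: infinite loop, nothing is accepted
    right; right; left
    obtain ⟨α, β, hαβ, hβm, heqR⟩ := exists_rep (chR M q)
    intro i j _ _ hacc
    have run0 : ∀ k, Relation.ReflTransGen (NrNFAwtl.Step M)
        (cfg q i j) (cfg (chR M q k) i j) := by
      intro k
      induction k with
      | zero => exact Relation.ReflTransGen.refl
      | succ k ih => exact ih.tail (by rw [chR_succ]; exact stepR (hR k) i j)
    have seg : ∀ d, 1 ≤ d → Relation.TransGen (NrNFAwtl.Step M)
        (cfg (chR M q α) i j) (cfg (chR M q (α + d)) i j) := by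
      intro d hd
      induction d with
      | zero => omega
      | succ d ih =>
        rcases Nat.eq_zero_or_pos d with rfl | hd'
        · exact Relation.TransGen.single
            (by rw [show α + 1 = α + 1 from rfl, chR_succ]; exact stepR (hR α) i j)
        · exact (ih hd').tail
            (by rw [show α + (d + 1) = (α + d) + 1 by omega, chR_succ]
                exact stepR (hR (α + d)) i j)
    have cyc : Relation.TransGen (NrNFAwtl.Step M)
        (cfg (chR M q α) i j) (cfg (chR M q α) i j) := by
      have h1 := seg (β - α) (by omega)
      rw [show α + (β - α) = β by omega, ← heqR] at h1
      exact h1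
    exact not_acc_of_cycle hdet ((acc_congr hdet (run0 α)).mp hacc) cyc
  · rw [not_forall] at hR
    have hR' : ∃ k, ¬ ZR M (chR M q k) := hR
    set k₀ := Nat.find hR' with hk₀
    have hk₀fail : ¬ ZR M (chR M q k₀) := Nat.find_spec hR'
    have hk₀alive : ∀ u < k₀, ZR M (chR M q u) := by
      intro u hu
      have := Nat.find_min hR' hu
      exact not_not.mp this
    set q₁ := chR M q k₀ with hq₁
    have run1' : ∀ n, (∀ u < n, ZR M (chR M q u)) → ∀ i j,
        Relation.ReflTransGen (NrNFAwtl.Step M)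
          (cfg q i j) (cfg (chR M q n) i j) := by
      intro n
      induction n with
      | zero => intro _ i j; exact Relation.ReflTransGen.refl
      | succ k ih =>
        intro halive i j
        exact (ih (fun u hu => halive u (by omega)) i j).tail
          (by rw [chR_succ]; exact stepR (halive k (by omega)) i j)
    have run1 : ∀ i j, Relation.ReflTransGen (NrNFAwtl.Step M)
        (cfg q i j) (cfg q₁ i j) := fun i j => run1' k₀ hk₀alive i j
    -- Phase A: the a-reading chain from q₁.
    by_cases hA : ∀ k, Γ2.a ∉ M.τ (chA M q₁ k) ∧ (M.δ (chA M q₁ k) Γ2.a).Nonempty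
    · -- infinite a-chain: acceptance is periodic in i
      left
      obtain ⟨α, β, hαβ, hβm, heqA⟩ := exists_rep (chA M q₁)
      refine ⟨β - α, by omega, by omega, ?_⟩
      intro i j him
      have halive : ∀ k, ∀ u < k, Γ2.a ∉ M.τ (chA M q₁ u) ∧
          (M.δ (chA M q₁ u) Γ2.a).Nonempty := fun k u _ => hA u
      have r1 := (run1 i j).trans (runA (halive i) (le_refl i) j)
      have r2 := (run1 (i + (β - α)) j).trans
        (runA (halive (i + (β - α))) (le_refl _) j)
      have hper : chA M q₁ (i + (β - α)) = chA M q₁ i := by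
        have := chain_periodic (f := fun p => nxt M p Γ2.a) (q := q₁)
          (α := α) (p := β - α)
          (by rw [show α + (β - α) = β by omega]; exact heqA.symm) i (by omega)
        exact this
      rw [acc_congr hdet r1, acc_congr hdet r2]
      rw [Nat.sub_self, Nat.sub_self, hper]
    · rw [not_forall] at hA
      have hA' : ∃ k, ¬ (Γ2.a ∉ M.τ (chA M q₁ k) ∧
          (M.δ (chA M q₁ k) Γ2.a).Nonempty) := hA
      set t := Nat.find hA' with ht
      have htfail := Nat.find_spec hA'
      have htalive : ∀ u < t, Γ2.a ∉ M.τ (chA M q₁ u) ∧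
          (M.δ (chA M q₁ u) Γ2.a).Nonempty := by
        intro u hu
        exact not_not.mp (Nat.find_min hA' hu)
      have htm : t < m := by
        by_contra hc
        push_neg at hc
        obtain ⟨α, β, hαβ, hβm, heqA⟩ := exists_rep (chA M q₁)
        have hper : chA M q₁ ((t - (β - α)) + (β - α)) = chA M q₁ (t - (β - α)) := by
          exact chain_periodic (f := fun p => nxt M p Γ2.a) (q := q₁)
            (α := α) (p := β - α)
            (by rw [show α + (β - α) = β by omega]; exact heqA.symm)
            (t - (β - α)) (by omega)
        rw [show (t - (β - α)) + (β - α) = t by omega] at hper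
        have : ¬ (Γ2.a ∉ M.τ (chA M q₁ (t - (β - α))) ∧
            (M.δ (chA M q₁ (t - (β - α))) Γ2.a).Nonempty) := by
          rw [← hper]; exact htfail
        have := Nat.find_min hA' (show t - (β - α) < t by omega)
        exact this ‹_›
      set r' := chA M q₁ t with hr'
      have runToR : ∀ i j, m ≤ i → Relation.ReflTransGen (NrNFAwtl.Step M)
          (cfg q i j) (.conf [] r' (wd (i - t) j)) := by
        intro i j hi
        exact (run1 i j).trans (runA htalive (by omega) j)
      by_cases haτ : Γ2.a ∈ M.τ r'
      · -- Phase B: the b-reading chain from r'.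
        by_cases hB : ∀ k, Γ2.b ∉ M.τ (chB M r' k) ∧ (M.δ (chB M r' k) Γ2.b).Nonempty
        · -- infinite b-chain: acceptance is periodic in j
          right; left
          obtain ⟨α, β, hαβ, hβm, heqB⟩ := exists_rep (chB M r')
          refine ⟨β - α, by omega, by omega, ?_⟩
          intro i j him hjm
          have r1 := (runToR i j him).trans
            (runB haτ (fun v _ => hB v) (by omega) (le_refl j))
          have r2 := (runToR i (j + (β - α)) him).trans
            (runB haτ (fun v _ => hB v) (by omega) (le_refl _))
          have hper : chB M r' (j + (β - α)) = chB M r' j := by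
            exact chain_periodic (f := fun p => nxt M p Γ2.b) (q := r')
              (α := α) (p := β - α)
              (by rw [show α + (β - α) = β by omega]; exact heqB.symm) j (by omega)
          rw [acc_congr hdet r1, acc_congr hdet r2]
          rw [Nat.sub_self, Nat.sub_self, hper]
        · rw [not_forall] at hB
          have hB' : ∃ k, ¬ (Γ2.b ∉ M.τ (chB M r' k) ∧
              (M.δ (chB M r' k) Γ2.b).Nonempty) := hB
          set s := Nat.find hB' with hs
          have hsfail := Nat.find_spec hB'
          have hsalive : ∀ v < s, Γ2.b ∉ M.τ (chB M r' v) ∧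
              (M.δ (chB M r' v) Γ2.b).Nonempty := by
            intro v hv
            exact not_not.mp (Nat.find_min hB' hv)
          have hsm : s < m := by
            by_contra hc
            push_neg at hc
            obtain ⟨α, β, hαβ, hβm, heqB⟩ := exists_rep (chB M r')
            have hper : chB M r' ((s - (β - α)) + (β - α)) = chB M r' (s - (β - α)) := by
              exact chain_periodic (f := fun p => nxt M p Γ2.b) (q := r')
                (α := α) (p := β - α)
                (by rw [show α + (β - α) = β by omega]; exact heqB.symm)
                (s - (β - α)) (by omega)
            rw [show (s - (β - α)) + (β - α) = s by omega] at hper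
            have : ¬ (Γ2.b ∉ M.τ (chB M r' (s - (β - α))) ∧
                (M.δ (chB M r' (s - (β - α))) Γ2.b).Nonempty) := by
              rw [← hper]; exact hsfail
            have := Nat.find_min hB' (show s - (β - α) < s by omega)
            exact this ‹_›
          set r'' := chB M r' s with hr''
          -- the divergence configuration
          obtain ⟨X, W, hrunD, hWa, hbW, hXW⟩ :
              ∃ X W : ℕ → ℕ → List Γ2,
                (∀ i j, m ≤ i → m ≤ j → Relation.ReflTransGen (NrNFAwtl.Step M)
                  (cfg q i j) (.conf (X i j) r'' (W i j))) ∧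
                (∀ i j, ∀ ℓ ∈ W i j, ℓ = Γ2.b ∨ ℓ ∈ M.τ r'') ∧
                (∀ i j, m ≤ j → Γ2.b ∈ W i j) ∧
                (∀ i j, X i j ++ W i j = wd (i - t) (j - s)) := by
            rcases Nat.eq_zero_or_pos s with hs0 | hs1
            · refine ⟨fun i j => [], fun i j => wd (i - t) j, ?_, ?_, ?_, ?_⟩
              · intro i j hi hj
                have : r'' = r' := by rw [hr'', hs0, chB_zero]
                rw [this]
                exact runToR i j hi
              · intro i j ℓ hℓ
                cases ℓ
                · right
                  have : r'' = r' := by rw [hr'', hs0, chB_zero]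
                  rw [this]; exact haτ
                · left; rfl
              · intro i j hj
                refine List.mem_append.mpr (Or.inr ?_)
                exact List.mem_replicate.mpr ⟨by omega, rfl⟩
              · intro i j
                rw [hs0]
                simp
            · refine ⟨fun i j => List.replicate (i - t) Γ2.a,
                fun i j => List.replicate (j - s) Γ2.b, ?_, ?_, ?_, ?_⟩
              · intro i j hi hj
                exact (runToR i j hi).trans (runB haτ hsalive hs1 (by omega))
              · intro i j ℓ hℓ
                left
                exact List.eq_of_mem_replicate hℓ
              · intro i j hj
                exact List.mem_replicate.mpr ⟨by omega, rfl⟩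
              · intro i j
                rfl
          by_cases hbτ : Γ2.b ∈ M.τ r''
          · have hWτ : ∀ i j, ∀ ξ ∈ W i j, ξ ∈ M.τ r'' := by
              intro i j ξ hξ
              rcases hWa i j ξ hξ with rfl | h
              · exact hbτ
              · exact h
            cases hend : M.δend r'' with
            | accept =>
              right; right; right; left
              intro i j hi hj
              exact (acc_congr hdet (hrunD i j hi hj)).mpr
                (Relation.ReflTransGen.single
                  (NrNFAwtl.Step.accept _ _ _ (hWτ i j) hend))
            | cont S =>
              by_cases hS : S.Nonempty
              · right; right; right; right
                have hts : 1 ≤ t + s := by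
                  by_contra hc
                  push_neg at hc
                  have ht0 : t = 0 := by omega
                  have hs0 : s = 0 := by omega
                  have h1 : r' = q₁ := by rw [hr', ht0, chA_zero]
                  have h2 : r'' = r' := by rw [hr'', hs0, chB_zero]
                  exact hk₀fail ⟨by rw [← h1]; exact haτ,
                    by rw [← h1, ← h2]; exact hbτ,
                    S, by rw [← h1, ← h2]; exact hend, hS⟩
                refine ⟨hS.some, t, s, htm, hsm, hts, ?_⟩
                intro i j hi hj
                have hstep : NrNFAwtl.Step M (.conf (X i j) r'' (W i j))
                    (cfg hS.some (i - t) (j - s)) := by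
                  have := NrNFAwtl.Step.restart (X i j) (W i j) r'' hS.some S
                    (hWτ i j) hend hS.some_mem
                  rw [hXW i j] at this
                  exact this
                exact Relation.TransGen.tail' (hrunD i j hi hj) hstep
              · -- dead restart: stuck
                right; right; left
                intro i j hi hj hacc
                have hSe : S = ∅ := Set.not_nonempty_iff_eq_empty.mp hS
                have hns := no_step_blocked (x := X i j) (w := W i j) (p := r'')
                  (fun ℓ hℓ => Or.inl (hWτ i j ℓ hℓ))
                  (Or.inr (by rw [hend, hSe]))
                exact not_acc_of_no_step (by simp) hns
                  ((acc_congr hdet (hrunD i j hi hj)).mp hacc)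
          · -- b is not translucent and undefined at r'': stuck with b on the tape
            have hδb : M.δ r'' Γ2.b = ∅ := by
              have h2 := hsfail
              push_neg at h2
              exact h2 hbτ
            right; right; left
            intro i j hi hj hacc
            have hns := no_step_blocked (x := X i j) (w := W i j) (p := r'')
              (fun ℓ hℓ => by
                rcases hWa i j ℓ hℓ with rfl | h
                · exact Or.inr hδb
                · exact Or.inl h)
              (Or.inl ⟨Γ2.b, hbW i j hj, hbτ⟩)
            exact not_acc_of_no_step (by simp) hns
              ((acc_congr hdet (hrunD i j hi hj)).mp hacc)
      · -- a is not translucent and undefined at r': stuck with a on the tape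
        have hδa : M.δ r' Γ2.a = ∅ := by
          have h2 := htfail
          push_neg at h2
          exact h2 haτ
        right; right; left
        intro i j hi hj hacc
        have heq : wd (i - t) j = Γ2.a :: wd (i - t - 1) j := by
          rw [show i - t = (i - t - 1) + 1 by omega]
          exact wd_cons _ _
        have hns := no_step_first (x := []) (w' := wd (i - t - 1) j)
          (p := r') (ℓ0 := Γ2.a) haτ hδa
        have hrun := runToR i j hi
        rw [heq] at hrun
        exact not_acc_of_no_step (by simp) hns ((acc_congr hdet hrun).mp hacc)

end Part3c
section Part3d

theorem part3 : ¬ AcceptedByNrDFAwtl Lvee := by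
  rintro ⟨Q, fQ, M, hdet, hlang⟩
  haveI := fQ
  classical
  obtain ⟨⟨qI, hI⟩, hδs, hes⟩ := id hdet
  set m := Fintype.card Q with hm
  have hm1 : 1 ≤ m := Fintype.card_pos_iff.mpr ⟨qI⟩
  set Θ := m * m + 2 * m with hΘ
  -- characterization of acceptance of a^i b^j
  have hwd_cnt_a : ∀ i j : ℕ, (wd i j).count Γ2.a = i := by
    intro i j
    simp [wd, List.count_append, List.count_replicate]
  have hwd_cnt_b : ∀ i j : ℕ, (wd i j).count Γ2.b = j := by
    intro i j
    simp [wd, List.count_append, List.count_replicate]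
  have hE : ∀ i j : ℕ, MAcc M (cfg qI i j) ↔ (j = i ∨ j = 2 * i) := by
    intro i j
    have h1 : wd i j ∈ Lvee ↔ (j = i ∨ j = 2 * i) := by
      simp [Lvee, hwd_cnt_a, hwd_cnt_b]
    rw [← h1, ← hlang]
    constructor
    · intro h
      exact ⟨qI, by rw [hI]; rfl, h⟩
    · rintro ⟨q0, hq0, hrun⟩
      rw [hI] at hq0
      have : q0 = qI := hq0
      subst this
      exact hrun
  -- the main inductive construction of sweeps
  have main : ∀ k, k ≤ m + 1 → ∃ f : ℕ → Q × ℕ × ℕ,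
      f 0 = (qI, 0, 0) ∧
      (∀ u ≤ k, (f u).2.1 ≤ m * u ∧ (f u).2.2 ≤ m * u ∧
        ∀ i j, Θ ≤ i → Θ ≤ j → Relation.ReflTransGen (NrNFAwtl.Step M)
          (cfg qI i j) (cfg (f u).1 (i - (f u).2.1) (j - (f u).2.2))) ∧
      (∀ u < k, (f u).2.1 ≤ (f (u+1)).2.1 ∧ (f u).2.2 ≤ (f (u+1)).2.2 ∧
        (f u).2.1 + (f u).2.2 < (f (u+1)).2.1 + (f (u+1)).2.2) := by
    intro k
    induction k with
    | zero =>
      intro _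
      refine ⟨fun _ => (qI, 0, 0), rfl, ?_, by omega⟩
      intro u hu
      have : u = 0 := by omega
      subst this
      refine ⟨by simp, by simp, ?_⟩
      intro i j _ _
      simpa using Relation.ReflTransGen.refl
    | succ k ih =>
      intro hk1
      obtain ⟨f, hf0, hbl, hmono⟩ := ih (by omega)
      obtain ⟨hTk, hSk, hlink⟩ := hbl k (le_refl k)
      set q := (f k).1 with hq
      set T := (f k).2.1 with hT
      set S := (f k).2.2 with hS
      have hTm : T ≤ m * m := le_trans hTk (Nat.mul_le_mul le_rfl (by omega : k ≤ m))
      have hSm : S ≤ m * m := le_trans hSk (Nat.mul_le_mul le_rfl (by omega : k ≤ m))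
      -- helper: link as an Acc-equivalence
      have hlinkE : ∀ i j, Θ ≤ i → Θ ≤ j →
          (MAcc M (cfg qI i j) ↔ MAcc M (cfg q (i - T) (j - S))) :=
        fun i j hi hj => acc_congr hdet (hlink i j hi hj)
      rcases sweep hdet q with ⟨p, hp1, hpm, hper⟩ | ⟨p, hp1, hpm, hper⟩ |
        hrej | hacc | ⟨q', t, s, htm, hsm, hts, hstep⟩
      · -- periodic in i: contradiction
        exfalso
        set I := Θ + m * m + m + 1 with hI2
        have h1 : MAcc M (cfg qI I (2 * I)) := (hE I (2 * I)).mpr (Or.inr rfl)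
        have h2 := (hlinkE I (2 * I) (by omega) (by omega)).mp h1
        have h3 := (hper (I - T) (2 * I - S) (by omega)).mp h2
        have h4 : cfg q ((I - T) + p) (2 * I - S) =
            cfg q ((I + p) - T) (2 * I - S) := by
          rw [show (I - T) + p = (I + p) - T by omega]
        rw [h4] at h3
        have h5 := (hlinkE (I + p) (2 * I) (by omega) (by omega)).mpr h3
        have h6 := (hE (I + p) (2 * I)).mp h5
        omega
      · -- periodic in j: contradiction
        exfalso
        set I := Θ + m * m + m + 1 with hI2
        have h1 : MAcc M (cfg qI I I) := (hE I I).mpr (Or.inl rfl)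
        have h2 := (hlinkE I I (by omega) (by omega)).mp h1
        have h3 := (hper (I - T) (I - S) (by omega) (by omega)).mp h2
        have h4 : cfg q (I - T) ((I - S) + p) =
            cfg q (I - T) ((I + p) - S) := by
          rw [show (I - S) + p = (I + p) - S by omega]
        rw [h4] at h3
        have h5 := (hlinkE I (I + p) (by omega) (by omega)).mpr h3
        have h6 := (hE I (I + p)).mp h5
        omega
      · -- rejects everything: contradiction with a^Θ b^Θ
        exfalso
        have h1 : MAcc M (cfg qI Θ Θ) := (hE Θ Θ).mpr (Or.inl rfl)
        have h2 := (hlinkE Θ Θ (le_refl Θ) (le_refl Θ)).mp h1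
        exact hrej (Θ - T) (Θ - S) (by omega) (by omega) h2
      · -- accepts everything: contradiction with a^Θ b^(Θ+1)
        exfalso
        have h2 := hacc (Θ - T) (Θ + 1 - S) (by omega) (by omega)
        have h1 := (hlinkE Θ (Θ + 1) (le_refl Θ) (by omega)).mpr h2
        have h3 := (hE Θ (Θ + 1)).mp h1
        have hΘ3 : 3 ≤ Θ := by
          have : 1 * 1 ≤ m * m := Nat.mul_le_mul hm1 hm1
          omega
        omega
      · -- a true sweep: extend the sequence
        refine ⟨fun n => if n ≤ k then f n else (q', T + t, S + s), ?_, ?_, ?_⟩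
        · simp [hf0]
        · intro u hu
          by_cases hukk : u ≤ k
          · simp only [if_pos hukk]
            exact hbl u hukk
          · have hu1 : u = k + 1 := by omega
            subst hu1
            simp only [if_neg hukk]
            have hmk : m * (k + 1) = m * k + m := by ring
            refine ⟨by show T + t ≤ m * (k + 1); omega,
              by show S + s ≤ m * (k + 1); omega, ?_⟩
            intro i j hi hj
            have h1 := hlink i j hi hj
            have h2 := hstep (i - T) (j - S) (by omega) (by omega)
            have h3 : cfg q' (i - T - t) (j - S - s) =
                cfg q' (i - (T + t)) (j - (S + s)) := by
              rw [Nat.sub_sub, Nat.sub_sub]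
            rw [h3] at h2
            exact h1.trans h2.to_reflTransGen
        · intro u hu
          by_cases huk : u + 1 ≤ k
          · simp only [if_pos huk, if_pos (by omega : u ≤ k)]
            exact hmono u (by omega)
          · have hu1 : u = k := by omega
            rw [hu1]
            simp only [if_pos (le_refl k), if_neg (by omega : ¬ k + 1 ≤ k)]
            refine ⟨by show T ≤ T + t; omega, by show S ≤ S + s; omega,
              by show T + S < T + t + (S + s); omega⟩
  -- take the full sequence and pigeonhole on states
  obtain ⟨f, hf0, hbl, hmono⟩ := main (m + 1) (le_refl _)
  have hmono2 : ∀ u v, u ≤ v → v ≤ m + 1 →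
      (f u).2.1 ≤ (f v).2.1 ∧ (f u).2.2 ≤ (f v).2.2 ∧
      (u < v → (f u).2.1 + (f u).2.2 < (f v).2.1 + (f v).2.2) := by
    intro u v huv hv
    induction v with
    | zero =>
      have : u = 0 := by omega
      subst this
      exact ⟨le_refl _, le_refl _, by omega⟩
    | succ v ihv =>
      by_cases huv2 : u ≤ v
      · obtain ⟨h1, h2, h3⟩ := ihv huv2 (by omega)
        obtain ⟨g1, g2, g3⟩ := hmono v (by omega)
        exact ⟨le_trans h1 g1, le_trans h2 g2, fun _ => by
          rcases Nat.lt_or_ge u v with h | h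
          · have := h3 h; omega
          · have : u = v := by omega
            subst this; omega⟩
      · have : u = v + 1 := by omega
        subst this
        exact ⟨le_refl _, le_refl _, by omega⟩
  have hcard : Fintype.card Q < Fintype.card (Fin (m + 2)) := by simp [hm]
  obtain ⟨x, y, hxy, heqq⟩ :=
    Fintype.exists_ne_map_eq_of_card_lt
      (fun u : Fin (m + 2) => (f u.val).1) hcard
  -- wlog x < y
  have key : ∀ x y : ℕ, x < y → y ≤ m + 1 → (f x).1 = (f y).1 → False := by
    intro x y hlt hy heq
    obtain ⟨hTx, hSx, hlinkx⟩ := hbl x (by omega)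
    obtain ⟨hTy, hSy, hlinky⟩ := hbl y hy
    obtain ⟨hmT, hmS, hmsum⟩ := hmono2 x y (by omega) hy
    set Tx := (f x).2.1
    set Sx := (f x).2.2
    set Ty := (f y).2.1
    set Sy := (f y).2.2
    have hsum : Tx + Sx < Ty + Sy := hmsum hlt
    have hTyb : Ty ≤ m * (m + 1) := le_trans hTy (Nat.mul_le_mul le_rfl (by omega : y ≤ m + 1))
    have hSyb : Sy ≤ m * (m + 1) := le_trans hSy (Nat.mul_le_mul le_rfl (by omega : y ≤ m + 1))
    -- the shift equivalence
    have hshift : ∀ i j, Θ ≤ i → Θ ≤ j →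
        ((j = i ∨ j = 2 * i) ↔
         (j + (Sy - Sx) = i + (Ty - Tx) ∨
          j + (Sy - Sx) = 2 * (i + (Ty - Tx)))) := by
      intro i j hi hj
      have e1 : (j = i ∨ j = 2 * i) ↔ MAcc M (cfg (f x).1 (i - Tx) (j - Sx)) := by
        rw [← hE i j]
        exact acc_congr hdet (hlinkx i j hi hj)
      have e2 : (j + (Sy - Sx) = i + (Ty - Tx) ∨
          j + (Sy - Sx) = 2 * (i + (Ty - Tx))) ↔
          MAcc M (cfg (f y).1 ((i + (Ty - Tx)) - Ty) ((j + (Sy - Sx)) - Sy)) := by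
        rw [← hE (i + (Ty - Tx)) (j + (Sy - Sx))]
        exact acc_congr hdet (hlinky _ _ (by omega) (by omega))
      have e3 : cfg (f y).1 ((i + (Ty - Tx)) - Ty) ((j + (Sy - Sx)) - Sy) =
          cfg (f x).1 (i - Tx) (j - Sx) := by
        rw [← heq, show (i + (Ty - Tx)) - Ty = i - Tx by omega,
          show (j + (Sy - Sx)) - Sy = j - Sx by omega]
      rw [e1, e2, e3]
    set I := Θ + m * (m + 1) + 1 with hI2
    have c1 := (hshift I I (by omega) (by omega)).mp (Or.inl rfl)
    have c2 := (hshift I (2 * I) (by omega) (by omega)).mp (Or.inr rfl)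
    omega
  rcases Nat.lt_or_ge x.val y.val with h | h
  · exact key x.val y.val h (by omega) heqq
  · have h' : y.val < x.val := by
      rcases Nat.lt_or_ge y.val x.val with h2 | h2
      · exact h2
      · exact absurd (Fin.ext (by omega)) hxy
    exact key y.val x.val h' (by omega) heqq.symm

end Part3d

/-- `L` is accepted by an nrDFAwtl, its image under the
alphabetic morphism `φ` equals `L_∨`, and `L_∨ = φ(L)` is not accepted by any
nrDFAwtl; hence `𝓛(nrDFAwtl)` is not closed under alphabetic morphisms. -/
theorem nrDFAwtl_not_closed_under_alphabetic_morphisms :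
    AcceptedByNrDFAwtl Lmorph ∧
    { y : List Γ2 | ∃ w ∈ Lmorph, y = w.map phiLetter } = Lvee ∧
    ¬ AcceptedByNrDFAwtl Lvee :=
  ⟨part1, image_phi_eq, part3⟩
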